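/- For every linear map M from d_A×d_A complex matrices to d_B×d_B complex matrices and every d_A×d_A complex matrix O, one has ‖M(O)‖₁ ≤ 2·‖O‖₁·(sup over density matrices ρ on the d_A-dimensional system of ‖M(ρ)‖₁). -/

import Mathlib

open Matrix ComplexOrder

/-- Trace norm of a square complex matrix. -/
noncomputable def traceNorm {n : Type*} [Fintype n] [DecidableEq n]
    (X : Matrix n n ℂ) : ℝ :=
  (((Matrix.posSemidef_conjTranspose_mul_self X).1.eigenvectorUnitary : Matrix n n ℂ) *
    diagonal (((↑) : ℝ → ℂ) ∘ Real.sqrt ∘ (Matrix.posSemidef_conjTranspose_mul_self X).1.eigenvalues) *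
    (star (Matrix.posSemidef_conjTranspose_mul_self X).1.eigenvectorUnitary : Matrix n n ℂ)).trace.re

/-- A density matrix: positive semidefinite with unit trace. -/
def IsDensityMatrix {n : Type*} [Fintype n] [DecidableEq n] (ρ : Matrix n n ℂ) : Prop :=
  ρ.PosSemidef ∧ ρ.trace = 1

/-- A quantum channel: a linear map admitting a Kraus representation. -/
def IsQuantumChannel {dA dB : ℕ}
    (N : Matrix (Fin dA) (Fin dA) ℂ →ₗ[ℂ] Matrix (Fin dB) (Fin dB) ℂ) : Prop :=
  ∃ (k : ℕ) (K : Fin k → Matrix (Fin dB) (Fin dA) ℂ),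
    (∀ X, N X = ∑ i, K i * X * (K i)ᴴ) ∧ (∑ i, (K i)ᴴ * K i = 1)

/-- Maximum causal effect. -/
noncomputable def CEmax {dA dB : ℕ}
    (N : Matrix (Fin dA) (Fin dA) ℂ →ₗ[ℂ] Matrix (Fin dB) (Fin dB) ℂ) : ℝ :=
  sSup {x : ℝ | ∃ ρ ρ' : Matrix (Fin dA) (Fin dA) ℂ,
    IsDensityMatrix ρ ∧ IsDensityMatrix ρ' ∧ ρ ≠ ρ' ∧
    x = traceNorm (N ρ - N ρ') / traceNorm (ρ - ρ')}

/-- Minimum causal effect. -/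
noncomputable def CEmin {dA dB : ℕ}
    (N : Matrix (Fin dA) (Fin dA) ℂ →ₗ[ℂ] Matrix (Fin dB) (Fin dB) ℂ) : ℝ :=
  sInf {x : ℝ | ∃ ρ ρ' : Matrix (Fin dA) (Fin dA) ℂ,
    IsDensityMatrix ρ ∧ IsDensityMatrix ρ' ∧ ρ ≠ ρ' ∧
    x = traceNorm (N ρ - N ρ') / traceNorm (ρ - ρ')}

/-- Minimum distinguishability preservation. -/
noncomputable def DPmin {dA dB : ℕ}
    (N : Matrix (Fin dA) (Fin dA) ℂ →ₗ[ℂ] Matrix (Fin dB) (Fin dB) ℂ) : ℝ :=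
  sInf {x : ℝ | ∃ p : ℝ, 0 ≤ p ∧ p ≤ 1 ∧
    ∃ ρ ρ' : Matrix (Fin dA) (Fin dA) ℂ,
      IsDensityMatrix ρ ∧ IsDensityMatrix ρ' ∧ ρ ≠ ρ' ∧
      x = traceNorm ((p : ℂ) • N ρ - ((1 - p : ℝ) : ℂ) • N ρ') /
          traceNorm ((p : ℂ) • ρ - ((1 - p : ℝ) : ℂ) • ρ')}

/-!
The trace norm is dual to contractions: `Re tr (C X) ≤ ‖X‖₁` whenever `Cᴴ C ≤ 1`, by AM-GM for
the Hilbert-Schmidt inner product of `Cᴴ |X|^½` and `V |X|^½`, where `X = V |X|` with `V`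
a contraction; and `C = Vᴴ` attains the bound. This yields the triangle inequality and
`‖ℜ X‖₁ ≤ ‖X‖₁`. A positive `P` is `tr P` times a state, a self-adjoint `H` is `H⁺ - H⁻` with
`‖H‖₁ = tr H⁺ + tr H⁻`, and writing `O = ℜ O + i ℑ O` costs the factor `2`.
-/

open scoped MatrixOrder ComplexStarModule

section StarOrdered

variable {A : Type*} [Ring A] [StarRing A] [PartialOrder A] [StarOrderedRing A]
  [TopologicalSpace A] [Algebra ℝ A] [ContinuousFunctionalCalculus ℝ A IsSelfAdjoint]
  [NonnegSpectrumClass ℝ A]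

/-- `q = a * star a` satisfies `q * q ≤ q`, which confines its spectrum to `[0, 1]`. -/
lemma mul_star_self_le_one_of_star_mul_self_le_one {a : A} (ha : star a * a ≤ 1) :
    a * star a ≤ 1 := by
  set q := a * star a
  have hq : 0 ≤ q := mul_star_self_nonneg a
  have hqq : q * q ≤ q := by
    simpa [q, mul_assoc] using star_left_conjugate_le_conjugate ha (star a)
  have hspec : 0 ≤ cfc (fun x : ℝ => x - x * x) q := by
    rwa [cfc_sub _ _ q, cfc_mul _ _ q, cfc_id' ℝ q, sub_nonneg]
  rw [cfc_nonneg_iff _ q] at hspec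
  rw [CFC.le_one_iff (R := ℝ) q]
  intro x hx
  nlinarith [hspec x hx, spectrum_nonneg_of_nonneg hq hx]

end StarOrdered

namespace Matrix

section Trace

variable {n : Type*} [Fintype n]

lemma re_trace_nonneg_of_nonneg {A : Matrix n n ℂ} (hA : 0 ≤ A) : 0 ≤ A.trace.re :=
  (Complex.nonneg_iff.mp (nonneg_iff_posSemidef.mp hA).trace_nonneg).1

lemma re_trace_mono {A B : Matrix n n ℂ} (h : A ≤ B) : A.trace.re ≤ B.trace.re := by
  simpa [trace_sub] using re_trace_nonneg_of_nonneg (sub_nonneg.mpr h)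

lemma two_mul_re_trace_conjTranspose_mul_le (Y Z : Matrix n n ℂ) :
    2 * (Yᴴ * Z).trace.re ≤ (Yᴴ * Y).trace.re + (Zᴴ * Z).trace.re := by
  have h := re_trace_nonneg_of_nonneg (star_mul_self_nonneg (Y - Z))
  have hsymm : (Zᴴ * Y).trace.re = (Yᴴ * Z).trace.re := by
    rw [← conjTranspose_conjTranspose Y, ← conjTranspose_mul, trace_conjTranspose,
      conjTranspose_conjTranspose, Complex.star_def, Complex.conj_re]
  simp only [star_eq_conjTranspose, conjTranspose_sub, sub_mul, mul_sub, trace_sub,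
    Complex.sub_re] at h
  linarith

end Trace

variable {n : Type*} [Fintype n] [DecidableEq n]

lemma re_trace_conjTranspose_mul_self_mul_le {C : Matrix n n ℂ} (hC : Cᴴ * C ≤ 1)
    (R : Matrix n n ℂ) : ((C * R)ᴴ * (C * R)).trace.re ≤ (Rᴴ * R).trace.re := by
  refine re_trace_mono ?_
  calc (C * R)ᴴ * (C * R) = star R * (Cᴴ * C) * R := by
        rw [conjTranspose_mul, star_eq_conjTranspose]; noncomm_ring
    _ ≤ star R * 1 * R := star_left_conjugate_le_conjugate hC R
    _ = Rᴴ * R := by rw [mul_one, star_eq_conjTranspose]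

lemma exists_contraction_mul_abs (X : Matrix n n ℂ) :
    ∃ V : Matrix n n ℂ, Vᴴ * V ≤ 1 ∧ X = V * CFC.abs X ∧ Vᴴ * X = CFC.abs X := by
  set A := CFC.abs X
  have hcont (f : ℝ → ℝ) : ContinuousOn f (spectrum ℝ A) := finite_real_spectrum.continuousOn f
  have hcfc_mul (f g : ℝ → ℝ) : cfc f A * cfc g A = cfc (fun t => f t * g t) A :=
    (cfc_mul f g A (hcont f) (hcont g)).symm
  have hXX : Xᴴ * X = cfc (fun t : ℝ => t * t) A := by
    rw [← star_eq_conjTranspose, ← CFC.abs_mul_abs, ← hcfc_mul, cfc_id' ℝ A]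
  -- with `0⁻¹ = 0`, `P` is the Moore-Penrose pseudo-inverse of `A`, and `V = X * P`
  set P := cfc (fun t : ℝ => t⁻¹) A
  have hP : Pᴴ = P := (cfc_predicate (fun t : ℝ => t⁻¹) A).star_eq
  refine ⟨X * P, ?_, ?_, ?_⟩
  · rw [conjTranspose_mul, hP, mul_assoc, ← mul_assoc Xᴴ, hXX, hcfc_mul, hcfc_mul]
    refine cfc_le_one _ A fun t _ => ?_
    rcases eq_or_ne t 0 with rfl | ht
    · simp
    · simp [ht]
  · -- `1 - P * A` projects onto `ker A = ker X`
    have hker : X * (1 - P * A) = 0 := by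
      have hE : 1 - P * A = cfc (fun t : ℝ => 1 - t⁻¹ * t) A := by
        rw [cfc_sub (fun _ : ℝ => 1) (fun t : ℝ => t⁻¹ * t) A (hcont _) (hcont _),
          cfc_const_one ℝ A, ← hcfc_mul, cfc_id' ℝ A]
      set E := cfc (fun t : ℝ => 1 - t⁻¹ * t) A
      have hEE : Eᴴ = E := IsSelfAdjoint.star_eq (cfc_predicate _ A)
      rw [← conjTranspose_mul_self_eq_zero, conjTranspose_mul, hE, hEE, mul_assoc,
        ← mul_assoc Xᴴ, hXX, hcfc_mul, hcfc_mul]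
      refine (cfc_congr fun t _ => ?_).trans (cfc_zero ℝ A)
      rcases eq_or_ne t 0 with rfl | ht
      · simp
      · simp [ht]
    rwa [mul_sub, mul_one, sub_eq_zero, ← mul_assoc] at hker
  · rw [conjTranspose_mul, hP, mul_assoc, hXX, hcfc_mul]
    nth_rw 2 [← cfc_id' ℝ A]
    refine cfc_congr fun t _ => ?_
    rcases eq_or_ne t 0 with rfl | ht
    · simp
    · field_simp

end Matrix

section TraceNorm

open Matrix

variable {n : Type*} [Fintype n] [DecidableEq n]

lemma traceNorm_eq_re_trace_abs (X : Matrix n n ℂ) : traceNorm X = (CFC.abs X).trace.re := by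
  have hXX := posSemidef_conjTranspose_mul_self X
  rw [CFC.abs, star_eq_conjTranspose, CFC.sqrt_eq_real_sqrt _ (nonneg_iff_posSemidef.mpr hXX),
    cfcₙ_eq_cfc (hf0 := Real.sqrt_zero), hXX.1.cfc_eq]
  rfl

lemma traceNorm_nonneg (X : Matrix n n ℂ) : 0 ≤ traceNorm X := by
  rw [traceNorm_eq_re_trace_abs]
  exact re_trace_nonneg_of_nonneg (CFC.abs_nonneg X)

lemma traceNorm_of_nonneg {A : Matrix n n ℂ} (hA : 0 ≤ A) : traceNorm A = A.trace.re := by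
  rw [traceNorm_eq_re_trace_abs, CFC.abs_of_nonneg A]

lemma traceNorm_zero : traceNorm (0 : Matrix n n ℂ) = 0 := by
  simp [traceNorm_of_nonneg]

lemma traceNorm_smul (c : ℂ) (X : Matrix n n ℂ) : traceNorm (c • X) = ‖c‖ * traceNorm X := by
  have habs : CFC.abs (c • X) = CFC.abs (‖c‖₊ • X) := by
    rw [NNReal.smul_def, coe_nnnorm, ← Complex.coe_smul]
    simp only [CFC.abs, star_smul, smul_mul_smul_comm, RCLike.star_def, Complex.conj_mul',
      Complex.conj_ofReal, sq]
  rw [traceNorm_eq_re_trace_abs, traceNorm_eq_re_trace_abs, habs, CFC.abs_smul_nonneg]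
  simp [NNReal.smul_def]

lemma traceNorm_neg (X : Matrix n n ℂ) : traceNorm (-X) = traceNorm X := by
  simpa using traceNorm_smul (-1) X

lemma traceNorm_of_isSelfAdjoint {H : Matrix n n ℂ} (hH : IsSelfAdjoint H) :
    traceNorm H = (H⁺).trace.re + (H⁻).trace.re := by
  rw [traceNorm_eq_re_trace_abs, ← CFC.posPart_add_negPart H, trace_add, Complex.add_re]

lemma re_trace_mul_le_traceNorm {C : Matrix n n ℂ} (hC : Cᴴ * C ≤ 1) (X : Matrix n n ℂ) :
    (C * X).trace.re ≤ traceNorm X := by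
  obtain ⟨V, hV, hXV, -⟩ := exists_contraction_mul_abs X
  set R := CFC.sqrt (CFC.abs X)
  have hR : Rᴴ = R := (CFC.sqrt_nonneg _).isSelfAdjoint.star_eq
  have hRR : Rᴴ * R = CFC.abs X := by rw [hR]; exact CFC.sqrt_mul_sqrt_self _ (CFC.abs_nonneg X)
  have hC' : Cᴴᴴ * Cᴴ ≤ 1 := by
    rw [conjTranspose_conjTranspose]; exact mul_star_self_le_one_of_star_mul_self_le_one hC
  have htr : (C * X).trace = ((Cᴴ * R)ᴴ * (V * R)).trace := by
    rw [hXV, ← hRR, hR, conjTranspose_mul, conjTranspose_conjTranspose, hR, ← mul_assoc,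
      ← mul_assoc, trace_mul_comm]
    simp only [mul_assoc]
  have := two_mul_re_trace_conjTranspose_mul_le (Cᴴ * R) (V * R)
  have := re_trace_conjTranspose_mul_self_mul_le hC' R
  have := re_trace_conjTranspose_mul_self_mul_le hV R
  rw [traceNorm_eq_re_trace_abs, ← hRR, htr]
  linarith

lemma traceNorm_add_le (X Y : Matrix n n ℂ) : traceNorm (X + Y) ≤ traceNorm X + traceNorm Y := by
  obtain ⟨V, hV, -, hVXY⟩ := exists_contraction_mul_abs (X + Y)
  have hV' : Vᴴᴴ * Vᴴ ≤ 1 := by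
    rw [conjTranspose_conjTranspose]; exact mul_star_self_le_one_of_star_mul_self_le_one hV
  rw [traceNorm_eq_re_trace_abs, ← hVXY, mul_add, trace_add, Complex.add_re]
  exact add_le_add (re_trace_mul_le_traceNorm hV' X) (re_trace_mul_le_traceNorm hV' Y)

lemma traceNorm_sum_le {ι : Type*} (s : Finset ι) (X : ι → Matrix n n ℂ) :
    traceNorm (∑ i ∈ s, X i) ≤ ∑ i ∈ s, traceNorm (X i) :=
  Finset.le_sum_of_subadditive traceNorm traceNorm_zero.le traceNorm_add_le s X

lemma traceNorm_realPart_le (X : Matrix n n ℂ) : traceNorm (ℜ X : Matrix n n ℂ) ≤ traceNorm X := by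
  obtain ⟨V, hV, -, hVH⟩ := exists_contraction_mul_abs (ℜ X : Matrix n n ℂ)
  have hV' : Vᴴᴴ * Vᴴ ≤ 1 := by
    rw [conjTranspose_conjTranspose]; exact mul_star_self_le_one_of_star_mul_self_le_one hV
  have hconj : (Vᴴ * Xᴴ).trace.re = (V * X).trace.re := by
    rw [← conjTranspose_mul, trace_conjTranspose, Complex.star_def, Complex.conj_re,
      trace_mul_comm]
  have := re_trace_mul_le_traceNorm hV' X
  have := re_trace_mul_le_traceNorm hV X
  rw [traceNorm_eq_re_trace_abs, ← hVH, realPart_apply_coe, mul_smul_comm, mul_add, trace_smul,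
    trace_add, star_eq_conjTranspose]
  simp only [Complex.real_smul, Complex.mul_re, Complex.add_re, Complex.ofReal_re,
    Complex.ofReal_im, zero_mul, sub_zero]
  linarith

lemma traceNorm_imaginaryPart_le (X : Matrix n n ℂ) :
    traceNorm (ℑ X : Matrix n n ℂ) ≤ traceNorm X := by
  have h := traceNorm_realPart_le (Complex.I • X)
  rwa [realPart_I_smul, NegMemClass.coe_neg, traceNorm_neg, traceNorm_smul, Complex.norm_I,
    one_mul] at h

lemma norm_apply_le_traceNorm (X : Matrix n n ℂ) (i j : n) : ‖X i j‖ ≤ traceNorm X := by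
  set u : ℂ := star (X i j) / ‖X i j‖
  have hC : (single j i u)ᴴ * single j i u ≤ 1 := by
    rw [conjTranspose_single, single_mul_single_same, ← diagonal_single, ← diagonal_one,
      ← sub_nonneg, diagonal_sub, nonneg_iff_posSemidef, posSemidef_diagonal_iff]
    intro k
    rcases eq_or_ne k i with rfl | hk
    · have hz : X k j / ‖X k j‖ * (starRingEnd ℂ (X k j) / ‖X k j‖) =
          ((‖X k j‖ / ‖X k j‖) ^ 2 : ℝ) := by
        push_cast
        rw [div_mul_div_comm, Complex.mul_conj', sq, sq, div_mul_div_comm]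
      simp only [u, Pi.single_eq_same, RCLike.star_def, map_div₀, Complex.conj_conj,
        Complex.conj_ofReal, sub_nonneg, hz]
      exact_mod_cast pow_le_one₀ (n := 2) (by positivity) (div_self_le_one ‖X k j‖)
    · simp [hk]
  have hu : u * X i j = ‖X i j‖ := by
    rcases eq_or_ne (X i j) 0 with h | h
    · simp [u, h]
    · rw [div_mul_eq_mul_div, RCLike.star_def, Complex.conj_mul', sq, mul_div_assoc,
        div_self (by simpa using h), mul_one]
  simpa [trace_single_mul, hu] using re_trace_mul_le_traceNorm hC X

end TraceNorm

section LinearMap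

open Matrix

variable {m k : Type*} [Fintype m] [DecidableEq m] [Fintype k] [DecidableEq k]

lemma traceNorm_of_isDensityMatrix {ρ : Matrix m m ℂ} (hρ : IsDensityMatrix ρ) :
    traceNorm ρ = 1 := by
  rw [traceNorm_of_nonneg (nonneg_iff_posSemidef.mpr hρ.1), hρ.2, Complex.one_re]

lemma exists_traceNorm_map_le (M : Matrix m m ℂ →ₗ[ℂ] Matrix k k ℂ) :
    ∃ K, ∀ X, traceNorm (M X) ≤ K * traceNorm X := by
  refine ⟨∑ i, ∑ j, traceNorm (M (single i j 1)), fun X => ?_⟩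
  calc traceNorm (M X) = traceNorm (∑ i, ∑ j, X i j • M (single i j 1)) := by
        conv_lhs => rw [matrix_eq_sum_single X]
        simp [map_sum, ← map_smul, smul_single]
    _ ≤ ∑ i, ∑ j, traceNorm (X i j • M (single i j 1)) :=
        (traceNorm_sum_le _ _).trans (Finset.sum_le_sum fun i _ => traceNorm_sum_le _ _)
    _ ≤ ∑ i, ∑ j, traceNorm X * traceNorm (M (single i j 1)) := by
        gcongr with i _ j _
        rw [traceNorm_smul]
        exact mul_le_mul_of_nonneg_right (norm_apply_le_traceNorm X i j) (traceNorm_nonneg _)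
    _ = _ := by simp only [Finset.mul_sum, mul_comm]

variable (M : Matrix m m ℂ →ₗ[ℂ] Matrix k k ℂ) {S : ℝ}

lemma traceNorm_map_le_of_nonneg (hS : ∀ ρ, IsDensityMatrix ρ → traceNorm (M ρ) ≤ S)
    {P : Matrix m m ℂ} (hP : 0 ≤ P) :
    traceNorm (M P) ≤ P.trace.re * S := by
  have hP' := nonneg_iff_posSemidef.mp hP
  have htr : P.trace = (P.trace.re : ℂ) :=
    Complex.eq_re_of_ofReal_le (r := 0) (by rw [Complex.ofReal_zero]; exact hP'.trace_nonneg)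
  set t := P.trace.re
  have ht : 0 ≤ t := re_trace_nonneg_of_nonneg hP
  rcases ht.eq_or_lt with ht | ht
  · have hP0 : P = 0 := hP'.trace_eq_zero_iff.mp (by rw [htr, ← ht, Complex.ofReal_zero])
    rw [hP0, map_zero, traceNorm_zero, ← ht, zero_mul]
  · have hρ : IsDensityMatrix (((t⁻¹ : ℝ) : ℂ) • P) := by
      refine ⟨hP'.smul (Complex.zero_le_real.mpr (inv_nonneg.mpr ht.le)), ?_⟩
      rw [trace_smul, htr, smul_eq_mul, ← Complex.ofReal_mul, inv_mul_cancel₀ ht.ne',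
        Complex.ofReal_one]
    calc traceNorm (M P) = t * traceNorm (M (((t⁻¹ : ℝ) : ℂ) • P)) := by
          rw [map_smul, traceNorm_smul, Complex.norm_real,
            Real.norm_of_nonneg (inv_nonneg.mpr ht.le), ← mul_assoc, mul_inv_cancel₀ ht.ne', one_mul]
      _ ≤ t * S := mul_le_mul_of_nonneg_left (hS _ hρ) ht.le

lemma traceNorm_map_le_of_isSelfAdjoint (hS : ∀ ρ, IsDensityMatrix ρ → traceNorm (M ρ) ≤ S)
    {H : Matrix m m ℂ} (hH : IsSelfAdjoint H) :
    traceNorm (M H) ≤ traceNorm H * S := by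
  calc traceNorm (M H) = traceNorm (M (H⁺) - M (H⁻)) := by
        rw [← map_sub, CFC.posPart_sub_negPart H]
    _ ≤ traceNorm (M (H⁺)) + traceNorm (M (H⁻)) := by
        simpa [sub_eq_add_neg, traceNorm_neg] using traceNorm_add_le (M (H⁺)) (-M (H⁻))
    _ ≤ (H⁺).trace.re * S + (H⁻).trace.re * S :=
        add_le_add (traceNorm_map_le_of_nonneg M hS (CFC.posPart_nonneg H))
          (traceNorm_map_le_of_nonneg M hS (CFC.negPart_nonneg H))
    _ = traceNorm H * S := by rw [traceNorm_of_isSelfAdjoint hH, add_mul]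

end LinearMap

/-- **Trace-norm bound for linear maps via their action on states.**
For every linear map `M` on matrices and every matrix `O`,
`‖M(O)‖₁ ≤ 2·‖O‖₁·sup { ‖M(ρ)‖₁ : ρ a density matrix }`. -/
theorem traceNorm_map_le_two_mul_sup_on_states {dA dB : ℕ}
    (M : Matrix (Fin dA) (Fin dA) ℂ →ₗ[ℂ] Matrix (Fin dB) (Fin dB) ℂ)
    (O : Matrix (Fin dA) (Fin dA) ℂ) :
    traceNorm (M O) ≤ 2 * traceNorm O *
      sSup {x : ℝ | ∃ ρ : Matrix (Fin dA) (Fin dA) ℂ,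
        IsDensityMatrix ρ ∧ x = traceNorm (M ρ)} := by
  set S := sSup {x : ℝ | ∃ ρ : Matrix (Fin dA) (Fin dA) ℂ,
    IsDensityMatrix ρ ∧ x = traceNorm (M ρ)}
  obtain ⟨K, hK⟩ := exists_traceNorm_map_le M
  have hS : ∀ ρ, IsDensityMatrix ρ → traceNorm (M ρ) ≤ S := fun ρ hρ =>
    le_csSup ⟨K, by rintro _ ⟨ρ', hρ', rfl⟩; simpa [traceNorm_of_isDensityMatrix hρ'] using hK ρ'⟩
      ⟨ρ, hρ, rfl⟩
  have hS0 : 0 ≤ S := Real.sSup_nonneg (by rintro _ ⟨ρ, -, rfl⟩; exact traceNorm_nonneg _)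
  calc traceNorm (M O) ≤ traceNorm (M (ℜ O)) + traceNorm (M (ℑ O)) := by
        conv_lhs => rw [← realPart_add_I_smul_imaginaryPart O, map_add, map_smul]
        refine (traceNorm_add_le _ _).trans_eq ?_
        rw [traceNorm_smul, Complex.norm_I, one_mul]
    _ ≤ traceNorm (ℜ O : Matrix (Fin dA) (Fin dA) ℂ) * S +
          traceNorm (ℑ O : Matrix (Fin dA) (Fin dA) ℂ) * S :=
        add_le_add (traceNorm_map_le_of_isSelfAdjoint M hS (ℜ O).2)
          (traceNorm_map_le_of_isSelfAdjoint M hS (ℑ O).2)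
    _ ≤ traceNorm O * S + traceNorm O * S :=
        add_le_add (mul_le_mul_of_nonneg_right (traceNorm_realPart_le O) hS0)
          (mul_le_mul_of_nonneg_right (traceNorm_imaginaryPart_le O) hS0)
    _ = 2 * traceNorm O * S := by ring
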